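/- arXiv:2411.03413 — 3 statements merged into one kernel-verified Lean document; each statement's English description precedes it below -/
import Mathlib

section
/- For the elementary symmetric polynomial constraint: if p_1,...,p_n ≥ 0 with sum equal to 1, then ℓ! · Σ_{1 ≤ x_1 < x_2 < ... < x_ℓ ≤ n} Π_{i=1}^ℓ p_{x_i} ≤ exp(-ℓ(ℓ-1)/(2n)). -/
/-!
Write `e_k` for the `k`-th elementary symmetric polynomial of `p`. Euler's identity
`(k + 1) e_{k+1} = ∑ᵢ pᵢ e_k(p without i)`, combined with
`e_{k+1}(p without i) = e_{k+1} - pᵢ e_k(p without i)`, gives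
`(k + 2) e_{k+2} = e_{k+1} - ∑ᵢ pᵢ · pᵢ e_k(p without i)`. The weights `pᵢ e_k(p without i)`
vary together with `pᵢ`, because their pairwise differences factor as
`(pᵢ - pⱼ) e_k(p without i, j)`; so Chebyshev's sum inequality bounds the last sum below by
`(k + 1) e_{k+1} / n`. Hence `(k + 1) e_{k+1} ≤ (1 - k / n) e_k`, and iterating,
`ℓ! e_ℓ ≤ ∏_{i<ℓ} (1 - i / n) ≤ exp (-∑_{i<ℓ} i / n)`.
-/

open Finset
open scoped Nat

namespace Multiset

variable {R : Type*} [CommSemiring R]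

theorem esymm_cons_succ (a : R) (s : Multiset R) (k : ℕ) :
    (a ::ₘ s).esymm (k + 1) = s.esymm (k + 1) + a * s.esymm k := by
  simp [esymm, map_map, sum_map_mul_left]

end Multiset

namespace Finset

variable {ι R : Type*}

section CommSemiring

variable [CommSemiring R] (s : Finset ι) (p : ι → R)

noncomputable def esymm (k : ℕ) : R := ∑ t ∈ s.powersetCard k, ∏ i ∈ t, p i

@[simp]
theorem esymm_zero : s.esymm p 0 = 1 := by simp [esymm]

@[simp]
theorem esymm_one : s.esymm p 1 = ∑ i ∈ s, p i := by simp [esymm, powersetCard_one]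

theorem esymm_eq_zero_of_card_lt {k : ℕ} (h : #s < k) : s.esymm p k = 0 := by
  rw [esymm, powersetCard_eq_empty.mpr h, sum_empty]

variable {s} [DecidableEq ι]

theorem esymm_insert_succ {a : ι} (ha : a ∉ s) (k : ℕ) :
    (insert a s).esymm p (k + 1) = s.esymm p (k + 1) + p a * s.esymm p k := by
  simp only [esymm, ← esymm_map_val, insert_val_of_notMem ha, Multiset.map_cons,
    Multiset.esymm_cons_succ]

variable (s)

theorem succ_mul_esymm_succ (k : ℕ) :
    (k + 1 : R) * s.esymm p (k + 1) = ∑ i ∈ s, p i * (s.erase i).esymm p k := by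
  induction s using Finset.induction_on generalizing k with
  | empty => rw [esymm_eq_zero_of_card_lt _ _ (by simp), mul_zero, sum_empty]
  | @insert a s ha ih =>
    have herase : ∀ i ∈ s, (insert a s).erase i = insert a (s.erase i) := fun i hi =>
      erase_insert_of_ne fun h => ha (h ▸ hi)
    rw [sum_insert ha, erase_insert ha, sum_congr rfl fun i hi => by rw [herase i hi]]
    cases k with
    | zero => simp [sum_insert ha]
    | succ m =>
      have hins : ∀ i ∈ s, (insert a (s.erase i)).esymm p (m + 1)
          = (s.erase i).esymm p (m + 1) + p a * (s.erase i).esymm p m := fun i _ =>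
        esymm_insert_succ p (fun h => ha (mem_of_mem_erase h)) m
      rw [sum_congr rfl fun i hi => by rw [hins i hi], esymm_insert_succ p ha]
      simp only [mul_add, sum_add_distrib, ← ih, mul_left_comm (p _) (p a), ← mul_sum]
      push_cast
      ring

end CommSemiring

theorem mul_esymm_erase_sub_mul_esymm_erase [CommRing R] [DecidableEq ι] {s : Finset ι}
    (p : ι → R) {i j : ι} (hij : i ≠ j) (hi : i ∈ s) (hj : j ∈ s) (k : ℕ) :
    p i * (s.erase i).esymm p k - p j * (s.erase j).esymm p k
      = (p i - p j) * ((s.erase i).erase j).esymm p k := by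
  set t := (s.erase i).erase j with ht
  have hit : i ∉ t := fun h => notMem_erase i s (mem_of_mem_erase h)
  have hjt : j ∉ t := notMem_erase j _
  have hsi : s.erase i = insert j t := (insert_erase (mem_erase.mpr ⟨hij.symm, hj⟩)).symm
  have hsj : s.erase j = insert i t := by
    rw [ht, erase_right_comm, insert_erase (mem_erase.mpr ⟨hij, hi⟩)]
  cases k with
  | zero => simp only [esymm_zero]; ring
  | succ m => rw [hsi, hsj, esymm_insert_succ p hjt, esymm_insert_succ p hit]; ring

theorem esymm_nonneg [CommSemiring R] [PartialOrder R] [IsOrderedRing R] {s : Finset ι}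
    {p : ι → R} (hp : ∀ i ∈ s, 0 ≤ p i) (k : ℕ) : 0 ≤ s.esymm p k :=
  sum_nonneg fun _ ht => prod_nonneg fun i hi => hp i (mem_powersetCard.mp ht |>.1 hi)

theorem monovaryOn_mul_esymm_erase [CommRing R] [PartialOrder R] [IsOrderedRing R]
    [DecidableEq ι] {s : Finset ι} {p : ι → R} (hp : ∀ i ∈ s, 0 ≤ p i) (k : ℕ) :
    MonovaryOn (fun i => p i * (s.erase i).esymm p k) p s := by
  intro i hi j hj hlt
  rw [← sub_nonneg, mul_esymm_erase_sub_mul_esymm_erase p (ne_of_apply_ne p hlt.ne') hj hi]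
  exact mul_nonneg (sub_nonneg.mpr hlt.le)
    (esymm_nonneg (fun x hx => hp x (mem_of_mem_erase (mem_of_mem_erase hx))) k)

section LinearOrderedField

variable [Field R] [LinearOrder R] [IsStrictOrderedRing R] [DecidableEq ι] {s : Finset ι}
  {p : ι → R}

theorem succ_mul_esymm_succ_le (hp : ∀ i ∈ s, 0 ≤ p i) (hsum : ∑ i ∈ s, p i = 1) (k : ℕ) :
    (k + 1 : R) * s.esymm p (k + 1) ≤ (1 - k / #s) * s.esymm p k := by
  cases k with
  | zero => simp [hsum]
  | succ m =>
    have hcard : (0 : R) < #s := by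
      exact_mod_cast card_pos.mpr (nonempty_of_sum_ne_zero (hsum ▸ one_ne_zero))
    set q : ι → R := fun i => p i * (s.erase i).esymm p m
    have hq : ((m + 1 : ℕ) : R) * s.esymm p (m + 1) = ∑ i ∈ s, q i := by
      push_cast; exact succ_mul_esymm_succ s p m
    have herase : ∀ i ∈ s, (s.erase i).esymm p (m + 1) = s.esymm p (m + 1) - q i := by
      intro i hi
      rw [eq_sub_iff_add_eq, ← esymm_insert_succ p (notMem_erase i s), insert_erase hi]
    have hstep : ((m + 1 : ℕ) + 1 : R) * s.esymm p (m + 1 + 1)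
        = s.esymm p (m + 1) - ∑ i ∈ s, q i * p i := by
      rw [succ_mul_esymm_succ, sum_congr rfl fun i hi => by rw [herase i hi]]
      simp only [mul_sub, sum_sub_distrib, ← sum_mul, hsum, one_mul, mul_comm (p _) (q _)]
    have hcheb : (∑ i ∈ s, q i) * ∑ i ∈ s, p i ≤ #s * ∑ i ∈ s, q i * p i :=
      (monovaryOn_mul_esymm_erase hp m).sum_mul_sum_le_card_mul_sum
    rw [hsum, mul_one] at hcheb
    rw [hstep, sub_mul, one_mul, div_mul_eq_mul_div, hq]
    gcongr
    rwa [div_le_iff₀' hcard]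

theorem factorial_mul_esymm_le_prod (hp : ∀ i ∈ s, 0 ≤ p i) (hsum : ∑ i ∈ s, p i = 1)
    {ℓ : ℕ} (hℓ : ℓ ≤ #s) : (ℓ ! : R) * s.esymm p ℓ ≤ ∏ i ∈ range ℓ, (1 - i / #s : R) := by
  induction ℓ with
  | zero => simp
  | succ m ih =>
    have hm : (0 : R) ≤ 1 - m / #s := by
      rw [sub_nonneg]
      exact div_le_one_of_le₀ (by exact_mod_cast hℓ.trans' m.le_succ) (Nat.cast_nonneg _)
    calc ((m + 1) ! : R) * s.esymm p (m + 1) = m ! * ((m + 1) * s.esymm p (m + 1)) := by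
          push_cast [Nat.factorial_succ]; ring
      _ ≤ m ! * ((1 - m / #s) * s.esymm p m) :=
          mul_le_mul_of_nonneg_left (succ_mul_esymm_succ_le hp hsum m) (by positivity)
      _ = (1 - m / #s) * (m ! * s.esymm p m) := by ring
      _ ≤ (1 - m / #s) * ∏ i ∈ range m, (1 - i / #s : R) := by
          gcongr; exact ih (by omega)
      _ = ∏ i ∈ range (m + 1), (1 - i / #s : R) := by rw [prod_range_succ, mul_comm]

end LinearOrderedField

end Finset

theorem Real.prod_range_one_sub_div_le_exp {n ℓ : ℕ} (hℓ : ℓ ≤ n) :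
    ∏ i ∈ range ℓ, (1 - i / n : ℝ) ≤ exp (-(ℓ * (ℓ - 1)) / (2 * n)) := by
  have gauss : (∑ i ∈ range ℓ, (i : ℝ)) * 2 = ℓ * (ℓ - 1) := by
    rcases ℓ with _ | m
    · simp
    · rw [← Nat.cast_sum, ← Nat.cast_two, ← Nat.cast_mul, sum_range_id_mul_two]
      push_cast
      ring
  calc ∏ i ∈ range ℓ, (1 - i / n : ℝ) ≤ ∏ i ∈ range ℓ, exp (-(i / n)) := by
        refine prod_le_prod (fun i hi => ?_) fun i _ => ?_
        · rw [sub_nonneg]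
          exact div_le_one_of_le₀ (by exact_mod_cast (mem_range.mp hi).le.trans hℓ)
            (Nat.cast_nonneg _)
        · linarith [add_one_le_exp (-(i / n : ℝ))]
    _ = exp (-(ℓ * (ℓ - 1)) / (2 * n)) := by
        rw [← exp_sum, sum_neg_distrib, ← sum_div, ← gauss]
        ring_nf

/-- Bound on the elementary symmetric polynomial of a probability vector:
if `p₁, ..., pₙ ≥ 0` sum to `1`, then
`ℓ! · Σ_{x₁ < ⋯ < x_ℓ} Π p_{xᵢ} ≤ exp (-ℓ(ℓ-1)/(2n))`. -/
theorem esymm_birthday_bound (n ℓ : ℕ) (p : Fin n → ℝ)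
    (hp : ∀ i, 0 ≤ p i) (hsum : ∑ i, p i = 1) :
    (ℓ.factorial : ℝ) * ∑ s ∈ Finset.powersetCard ℓ (Finset.univ : Finset (Fin n)),
        ∏ i ∈ s, p i
      ≤ Real.exp (-((ℓ : ℝ) * ((ℓ : ℝ) - 1)) / (2 * n)) := by
  change (ℓ ! : ℝ) * univ.esymm p ℓ ≤ _
  rcases le_or_gt ℓ n with hℓ | hℓ
  · have hcard : #(univ : Finset (Fin n)) = n := by simp
    calc (ℓ ! : ℝ) * univ.esymm p ℓ ≤ ∏ i ∈ range ℓ, (1 - i / n : ℝ) := by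
          simpa only [hcard] using
            factorial_mul_esymm_le_prod (fun i _ => hp i) hsum (by simpa using hℓ)
      _ ≤ _ := Real.prod_range_one_sub_div_le_exp hℓ
  · rw [esymm_eq_zero_of_card_lt _ _ (by simpa using hℓ), mul_zero]
    exact (Real.exp_pos _).le
end

section
/- Let K = P·Q be a composition of Markov kernels with stationary distribution μ, and suppose the one-step entropy conservation Ent^φ_μ[f] ≤ (1/κ)·E_{x∼μP}[Ent^φ_{Q(x,·)}[f]] holds for all f ≥ 0, where Q is the adjoint of P with respect to μ. Then Ent^φ_μ[K f] ≤ (1-κ)·Ent^φ_μ[f] for all f ≥ 0. -/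
/-!
Write `ν = μP` and `Ent^φ_w[h] = E_w[φ ∘ h] - φ(E_w[h])`. Since `Q` is the adjoint of `P` and
`P` is stochastic, `νQ = μ`, so the law of total entropy splits
`Ent^φ_μ[f] = E_ν[Ent^φ_{Q(y,·)}[f]] + Ent^φ_ν[Qf]`. Jensen's inequality row by row gives the
data processing inequality `Ent^φ_μ[P g] ≤ Ent^φ_{μP}[g]`. Hence
`Ent^φ_μ[PQf] ≤ Ent^φ_ν[Qf] = Ent^φ_μ[f] - E_ν[Ent^φ_{Q(y,·)}[f]] ≤ (1 - κ) Ent^φ_μ[f]`.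
-/

open Finset Matrix

theorem ConvexOn.comp_mulVec_le_mulVec_comp {m n : Type*} [Fintype n] {φ : ℝ → ℝ} {s : Set ℝ}
    (hφ : ConvexOn ℝ s φ) {P : Matrix m n ℝ} (hP0 : ∀ x y, 0 ≤ P x y) (hP1 : ∀ x, ∑ y, P x y = 1)
    {g : n → ℝ} (hg : ∀ y, g y ∈ s) :
    φ ∘ (P *ᵥ g) ≤ P *ᵥ (φ ∘ g) := fun x =>
  hφ.map_sum_le (fun y _ => hP0 x y) (hP1 x) (fun y _ => hg y)

section PhiEntropy

variable {m n : Type*} [Fintype m] [Fintype n]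

noncomputable def phiEntropy (φ : ℝ → ℝ) (w : n → ℝ) (h : n → ℝ) : ℝ :=
  w ⬝ᵥ (φ ∘ h) - φ (w ⬝ᵥ h)

theorem sum_mul_phiEntropy_add_phiEntropy_mulVec (φ : ℝ → ℝ) {ν : m → ℝ} {μ : n → ℝ}
    {Q : Matrix m n ℝ} (hνQ : ν ᵥ* Q = μ) (f : n → ℝ) :
    ∑ y, ν y * phiEntropy φ (Q y) f + phiEntropy φ ν (Q *ᵥ f) = phiEntropy φ μ f := by
  have hsum : ∑ y, ν y * phiEntropy φ (Q y) f = ν ⬝ᵥ (Q *ᵥ (φ ∘ f)) - ν ⬝ᵥ (φ ∘ (Q *ᵥ f)) := by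
    simp only [phiEntropy, mul_sub, Finset.sum_sub_distrib]
    rfl
  rw [hsum, phiEntropy, phiEntropy, dotProduct_mulVec, dotProduct_mulVec, hνQ]
  ring

theorem phiEntropy_mulVec_le {φ : ℝ → ℝ} {s : Set ℝ} (hφ : ConvexOn ℝ s φ)
    {μ : m → ℝ} (hμ0 : 0 ≤ μ) {P : Matrix m n ℝ} (hP0 : ∀ x y, 0 ≤ P x y)
    (hP1 : ∀ x, ∑ y, P x y = 1) {g : n → ℝ} (hg : ∀ y, g y ∈ s) :
    phiEntropy φ μ (P *ᵥ g) ≤ phiEntropy φ (μ ᵥ* P) g := by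
  have hjensen : μ ⬝ᵥ (φ ∘ (P *ᵥ g)) ≤ μ ⬝ᵥ (P *ᵥ (φ ∘ g)) :=
    dotProduct_le_dotProduct_of_nonneg_left (hφ.comp_mulVec_le_mulVec_comp hP0 hP1 hg) hμ0
  rw [dotProduct_mulVec] at hjensen
  rw [phiEntropy, phiEntropy, dotProduct_mulVec]
  linarith

end PhiEntropy

theorem vecMul_vecMul_eq_of_adjoint {n : Type*} [Fintype n] {μ : n → ℝ} {P Q : Matrix n n ℝ}
    (hP1 : ∀ x, ∑ y, P x y = 1) (hadj : ∀ x y, μ x * P x y = (μ ᵥ* P) y * Q y x) :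
    μ ᵥ* P ᵥ* Q = μ := by
  ext x
  change ∑ y, (μ ᵥ* P) y * Q y x = μ x
  simp_rw [← hadj, ← Finset.mul_sum, hP1, mul_one]

theorem phi_entropy_decay_general {X : Type*} [Fintype X]
    (φ : ℝ → ℝ) (hφ : ConvexOn ℝ Set.univ φ)
    (μ : X → ℝ) (hμ0 : ∀ x, 0 ≤ μ x)
    (P Q : X → X → ℝ)
    (hP0 : ∀ x y, 0 ≤ P x y) (hP1 : ∀ x, ∑ y, P x y = 1)
    (hadj : ∀ x y, μ x * P x y = (∑ z, μ z * P z y) * Q y x)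
    (κ : ℝ) (hκ0 : 0 < κ)
    (hcons : ∀ f : X → ℝ, (∀ x, 0 ≤ f x) →
      (∑ x, μ x * φ (f x)) - φ (∑ x, μ x * f x) ≤
        (1 / κ) * ∑ y, (∑ z, μ z * P z y) *
          ((∑ x, Q y x * φ (f x)) - φ (∑ x, Q y x * f x)))
    (f : X → ℝ) (hf : ∀ x, 0 ≤ f x) :
    (∑ x, μ x * φ (∑ y, P x y * (∑ z, Q y z * f z)))
        - φ (∑ x, μ x * (∑ y, P x y * (∑ z, Q y z * f z)))
      ≤ (1 - κ) * ((∑ x, μ x * φ (f x)) - φ (∑ x, μ x * f x)) := by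
  change phiEntropy φ μ (P *ᵥ (Q *ᵥ f)) ≤ (1 - κ) * phiEntropy φ μ f
  have hcons_f : κ * phiEntropy φ μ f ≤ ∑ y, (μ ᵥ* P) y * phiEntropy φ (Q y) f := by
    have := hcons f hf
    rwa [one_div, inv_mul_eq_div, le_div_iff₀' hκ0] at this
  have htotal := sum_mul_phiEntropy_add_phiEntropy_mulVec φ
    (vecMul_vecMul_eq_of_adjoint (Q := Q) hP1 hadj) f
  have hdata := phiEntropy_mulVec_le hφ hμ0 hP0 hP1 (g := Q *ᵥ f) fun _ => Set.mem_univ _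
  linarith

/-- Entropy decay for a composed kernel `K = P·Q` from one-step entropy conservation:
if `μ` is stationary for `K = P·Q`, `Q` is the adjoint of `P` with respect to `μ`, and
`Ent^φ_μ[f] ≤ (1/κ) · E_{y ∼ μP}[Ent^φ_{Q(y,·)}[f]]` for all `f ≥ 0`, then
`Ent^φ_μ[K f] ≤ (1-κ) · Ent^φ_μ[f]` for all `f ≥ 0`. -/
theorem phi_entropy_decay {X : Type*} [Fintype X]
    (φ : ℝ → ℝ) (hφ : ConvexOn ℝ Set.univ φ)
    (μ : X → ℝ) (hμ0 : ∀ x, 0 ≤ μ x) (hμ1 : ∑ x, μ x = 1)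
    (P Q : X → X → ℝ)
    (hP0 : ∀ x y, 0 ≤ P x y) (hP1 : ∀ x, ∑ y, P x y = 1)
    (hQ0 : ∀ y z, 0 ≤ Q y z) (hQ1 : ∀ y, ∑ z, Q y z = 1)
    (hadj : ∀ x y, μ x * P x y = (∑ z, μ z * P z y) * Q y x)
    (hstat : ∀ z, ∑ x, μ x * (∑ y, P x y * Q y z) = μ z)
    (κ : ℝ) (hκ0 : 0 < κ) (hκ1 : κ ≤ 1)
    (hcons : ∀ f : X → ℝ, (∀ x, 0 ≤ f x) →
      (∑ x, μ x * φ (f x)) - φ (∑ x, μ x * f x) ≤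
        (1 / κ) * ∑ y, (∑ z, μ z * P z y) *
          ((∑ x, Q y x * φ (f x)) - φ (∑ x, Q y x * f x)))
    (f : X → ℝ) (hf : ∀ x, 0 ≤ f x) :
    (∑ x, μ x * φ (∑ y, P x y * (∑ z, Q y z * f z)))
        - φ (∑ x, μ x * (∑ y, P x y * (∑ z, Q y z * f z)))
      ≤ (1 - κ) * ((∑ x, μ x * φ (f x)) - φ (∑ x, μ x * f x)) :=
  phi_entropy_decay_general φ hφ μ hμ0 P Q hP0 hP1 hadj κ hκ0 hcons f hf
end

section
/- Let d ≥ 2 and define T(Δ) = Δ λ_c(Δ)/(1 + λ_c(Δ)) where λ_c(Δ) = (Δ-1)^{Δ-1}/(Δ-2)^Δ. Then T is increasing in Δ ≥ 3 and T(Δ) ≤ e for all Δ ≥ 3; in particular Δλ/(1+λ) ≤ e whenever 0 < λ ≤ λ_c(Δ). -/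
/-- The critical fugacity `λ_c(Δ) = (Δ-1)^{Δ-1}/(Δ-2)^Δ` of the hardcore model. -/
noncomputable def lambdaC (Δ : ℕ) : ℝ := ((Δ : ℝ) - 1) ^ (Δ - 1) / ((Δ : ℝ) - 2) ^ Δ

/-- `T(Δ) = Δ λ_c(Δ) / (1 + λ_c(Δ))`. -/
noncomputable def TΔ (Δ : ℕ) : ℝ := (Δ : ℝ) * lambdaC Δ / (1 + lambdaC Δ)

/-!
Since `x ↦ Δx/(1+x)` is increasing, `T(Δ) ≤ T(Δ+1)` is equivalent to
`Δ λ_c(Δ)/λ_c(Δ+1) ≤ Δ + 1 + λ_c(Δ)`, and `λ_c(Δ)/λ_c(Δ+1) = (1 + 1/(Δ(Δ-2)))^Δ ≤ e^t` with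
`t = 1/(Δ-2)`. For `Δ ≥ 4` the cubic Taylor bound on `e^t` and the second-order Bernoulli bound
`λ_c(Δ) = t(1+t)^(Δ-1) ≥ t(5+3t)/2` close the gap; `Δ = 3` is a direct computation.
The bound `T ≤ e` then follows from monotonicity, because
`1/T(n+2) = (1 + n(1 - 1/(n+1))^(n+1))/(n+2) → 1/e`.
-/

open Filter Topology Real

theorem one_add_mul_add_mul_sq_le_pow {K : Type*} [Field K] [LinearOrder K] [IsStrictOrderedRing K]
    {x : K} (hx : 0 ≤ x) (n : ℕ) :
    1 + n * x + n * (n - 1) / 2 * x ^ 2 ≤ (1 + x) ^ n := by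
  induction n with
  | zero => simp
  | succ n ih =>
    have hn : (0 : K) ≤ n * (n - 1) := by
      rcases n with _ | n
      · simp
      · push_cast; simp only [add_sub_cancel_right]; positivity
    calc 1 + ((n + 1 : ℕ) : K) * x + (n + 1 : ℕ) * ((n + 1 : ℕ) - 1) / 2 * x ^ 2
        ≤ (1 + n * x + n * (n - 1) / 2 * x ^ 2) * (1 + x) := by
          push_cast; nlinarith [mul_nonneg hn (pow_nonneg hx 3)]
      _ ≤ (1 + x) ^ n * (1 + x) := by gcongr
      _ = (1 + x) ^ (n + 1) := (pow_succ _ _).symm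

theorem mul_div_one_add_le_iff {K : Type*} [Field K] [LinearOrder K] [IsStrictOrderedRing K]
    {a b x : K} (ha : 0 ≤ a) (hb : 0 ≤ b) :
    x * a / (1 + a) ≤ (x + 1) * b / (1 + b) ↔ x * a ≤ b * (x + 1 + a) := by
  rw [div_le_div_iff₀ (by positivity) (by positivity)]
  constructor <;> intro h <;> linarith

theorem exp_le_cubic {t : ℝ} (h0 : 0 ≤ t) (h1 : t ≤ 1) :
    exp t ≤ 1 + t + t ^ 2 / 2 + 2 / 9 * t ^ 3 := by
  have := exp_bound' h0 h1 (n := 3) (by norm_num)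
  norm_num [Finset.sum_range_succ, Nat.factorial] at this
  linarith

theorem lambdaC_pos {Δ : ℕ} (hΔ : 3 ≤ Δ) : 0 < lambdaC Δ := by
  have : (3 : ℝ) ≤ Δ := by exact_mod_cast hΔ
  unfold lambdaC
  apply div_pos <;> apply pow_pos <;> linarith

theorem lambdaC_eq_inv_mul_pow {Δ : ℕ} (hΔ : 3 ≤ Δ) :
    lambdaC Δ = ((Δ : ℝ) - 2)⁻¹ * (1 + ((Δ : ℝ) - 2)⁻¹) ^ (Δ - 1) := by
  have h : (0 : ℝ) < Δ - 2 := by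
    have : (3 : ℝ) ≤ Δ := by exact_mod_cast hΔ
    linarith
  have h1 : 1 + ((Δ : ℝ) - 2)⁻¹ = (Δ - 1) / (Δ - 2) := by field_simp; ring
  obtain ⟨m, rfl⟩ : ∃ m, Δ = m + 1 := ⟨Δ - 1, by omega⟩
  rw [lambdaC, h1, div_pow, Nat.add_sub_cancel, pow_succ]
  field_simp

theorem lambdaC_eq_lambdaC_succ_mul {Δ : ℕ} (hΔ : 3 ≤ Δ) :
    lambdaC Δ = lambdaC (Δ + 1) * (1 + ((Δ : ℝ) * (Δ - 2))⁻¹) ^ Δ := by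
  obtain ⟨m, rfl⟩ : ∃ m, Δ = m + 2 := ⟨Δ - 2, by omega⟩
  have hm : (0 : ℝ) < m := by exact_mod_cast (by omega : 0 < m)
  rw [lambdaC, lambdaC, show m + 2 + 1 - 1 = m + 2 by omega, show m + 2 - 1 = m + 1 by omega]
  push_cast
  rw [show (m : ℝ) + 2 + 1 - 1 = m + 2 by ring, show (m : ℝ) + 2 + 1 - 2 = m + 1 by ring,
    show (m : ℝ) + 2 - 1 = m + 1 by ring, add_sub_cancel_right,
    show 1 + (((m : ℝ) + 2) * m)⁻¹ = ((m + 1) ^ 2) / ((m + 2) * m) by field_simp; ring,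
    div_pow, mul_pow, ← pow_mul, div_mul_div_comm, div_eq_div_iff (by positivity) (by positivity)]
  ring

theorem le_lambdaC {Δ : ℕ} (hΔ : 3 ≤ Δ) :
    (5 + 3 * ((Δ : ℝ) - 2)⁻¹) / 2 * ((Δ : ℝ) - 2)⁻¹ ≤ lambdaC Δ := by
  have h : (0 : ℝ) < Δ - 2 := by
    have : (3 : ℝ) ≤ Δ := by exact_mod_cast hΔ
    linarith
  have hcast : ((Δ - 1 : ℕ) : ℝ) = Δ - 1 := by rw [Nat.cast_sub (by omega)]; simp
  rw [lambdaC_eq_inv_mul_pow hΔ, mul_comm]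
  gcongr
  calc (5 + 3 * ((Δ : ℝ) - 2)⁻¹) / 2
      = 1 + (Δ - 1 : ℕ) * ((Δ : ℝ) - 2)⁻¹
          + (Δ - 1 : ℕ) * ((Δ - 1 : ℕ) - 1) / 2 * ((Δ : ℝ) - 2)⁻¹ ^ 2 := by
        rw [hcast]; field_simp; ring
    _ ≤ _ := one_add_mul_add_mul_sq_le_pow (by positivity) _

theorem mul_one_add_inv_pow_le {Δ : ℕ} (hΔ : 4 ≤ Δ) :
    Δ * (1 + ((Δ : ℝ) * (Δ - 2))⁻¹) ^ Δ ≤ Δ + 1 + lambdaC Δ := by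
  have hΔ' : (4 : ℝ) ≤ Δ := by exact_mod_cast hΔ
  set t := ((Δ : ℝ) - 2)⁻¹ with ht_def
  have ht : t * (Δ - 2) = 1 := inv_mul_cancel₀ (by linarith)
  have ht0 : 0 < t := inv_pos.2 (by linarith)
  have ht2 : t ≤ 1 / 2 := by rw [ht_def, inv_le_comm₀ (by linarith) (by norm_num)]; linarith
  have hpow : (1 + ((Δ : ℝ) * (Δ - 2))⁻¹) ^ Δ ≤ exp t := by
    set s := ((Δ : ℝ) * (Δ - 2))⁻¹ with hs_def
    have hs : 0 ≤ s := inv_nonneg.2 (by nlinarith)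
    calc (1 + s) ^ Δ ≤ exp s ^ Δ := pow_le_pow_left₀ (by linarith) (by linarith [add_one_le_exp s]) Δ
      _ = exp t := by
          rw [← exp_nat_mul, ht_def, hs_def]
          field_simp
  have hcubic : Δ * (1 + t + t ^ 2 / 2 + 2 / 9 * t ^ 3)
      = Δ + (1 + 2 * t) * (1 + t / 2 + 2 / 9 * t ^ 2) := by
    linear_combination (1 + t / 2 + 2 / 9 * t ^ 2) * ht
  calc Δ * (1 + ((Δ : ℝ) * (Δ - 2))⁻¹) ^ Δ
      ≤ Δ * (1 + t + t ^ 2 / 2 + 2 / 9 * t ^ 3) := by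
        gcongr
        exact hpow.trans (exp_le_cubic ht0.le (by linarith))
    _ ≤ Δ + 1 + (5 + 3 * t) / 2 * t := by
        rw [hcubic]
        nlinarith [mul_nonneg (sq_nonneg t) (by linarith : 0 ≤ 1 / 2 - t)]
    _ ≤ Δ + 1 + lambdaC Δ := by
        gcongr
        exact le_lambdaC (by omega)

theorem TΔ_le_TΔ_succ {Δ : ℕ} (hΔ : 3 ≤ Δ) : TΔ Δ ≤ TΔ (Δ + 1) := by
  obtain rfl | hΔ := hΔ.eq_or_lt
  · norm_num [TΔ, lambdaC]
  rw [TΔ, TΔ, Nat.cast_succ, mul_div_one_add_le_iff (lambdaC_pos (by omega)).le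
    (lambdaC_pos (by omega)).le]
  calc Δ * lambdaC Δ = lambdaC (Δ + 1) * (Δ * (1 + ((Δ : ℝ) * (Δ - 2))⁻¹) ^ Δ) := by
        rw [lambdaC_eq_lambdaC_succ_mul (by omega)]; ring
    _ ≤ lambdaC (Δ + 1) * (Δ + 1 + lambdaC Δ) := by
        gcongr
        · exact (lambdaC_pos (by omega)).le
        · exact mul_one_add_inv_pow_le hΔ

theorem monotoneOn_TΔ : MonotoneOn TΔ {Δ | 3 ≤ Δ} :=
  monotoneOn_nat_Ici_of_le_succ fun _ ↦ TΔ_le_TΔ_succ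

theorem inv_TΔ_add_two {n : ℕ} (hn : n ≠ 0) :
    (TΔ (n + 2))⁻¹ = (1 + n * (1 - 1 / (n + 1)) ^ (n + 1)) / (n + 2) := by
  have hn' : (0 : ℝ) < n := by exact_mod_cast Nat.pos_of_ne_zero hn
  rw [TΔ, lambdaC, show n + 2 - 1 = n + 1 by omega, show 1 - 1 / ((n : ℝ) + 1) = n / (n + 1) by
    field_simp; ring]
  push_cast
  rw [show (n : ℝ) + 2 - 1 = n + 1 by ring, add_sub_cancel_right, div_pow]
  field_simp
  ring

theorem tendsto_TΔ : Tendsto TΔ atTop (𝓝 (exp 1)) := by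
  have hpow : Tendsto (fun n : ℕ ↦ (1 - 1 / ((n : ℝ) + 1)) ^ (n + 1)) atTop (𝓝 (exp (-1))) := by
    simpa [sub_eq_add_neg, neg_div] using
      (tendsto_add_atTop_iff_nat 1).2 (tendsto_one_add_div_pow_exp (-1))
  have hinv : Tendsto (fun n : ℕ ↦ (TΔ (n + 2))⁻¹) atTop (𝓝 (exp (-1))) := by
    have hlim := ((tendsto_one_div_atTop_nhds_zero_nat (𝕜 := ℝ)).add hpow).mul
      (tendsto_natCast_div_add_atTop (2 : ℝ))
    rw [zero_add, mul_one] at hlim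
    refine hlim.congr' (eventually_ne_atTop 0 |>.mono fun n hn ↦ ?_)
    show _ = (TΔ (n + 2))⁻¹
    rw [inv_TΔ_add_two hn]
    have hn' : (n : ℝ) ≠ 0 := by exact_mod_cast hn
    field_simp
  have := hinv.inv₀ (exp_pos _).ne'
  simp only [inv_inv, exp_neg] at this
  exact (tendsto_add_atTop_iff_nat 2).1 this

theorem TΔ_le_exp_one {Δ : ℕ} (hΔ : 3 ≤ Δ) : TΔ Δ ≤ exp 1 := by
  have hmono : Monotone fun k ↦ TΔ (k + 3) :=
    monotone_add_nat_of_le_succ fun _ ↦ TΔ_le_TΔ_succ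
  obtain ⟨k, rfl⟩ := Nat.exists_eq_add_of_le' hΔ
  exact hmono.ge_of_tendsto ((tendsto_add_atTop_iff_nat 3).2 tendsto_TΔ) k

/-- `T(Δ) = Δλ_c(Δ)/(1+λ_c(Δ))` is increasing in `Δ ≥ 3` and bounded by `e`;
in particular `Δλ/(1+λ) ≤ e` whenever `0 < λ ≤ λ_c(Δ)`. -/
theorem T_monotone_and_le_e :
    (∀ Δ₁ Δ₂ : ℕ, 3 ≤ Δ₁ → Δ₁ ≤ Δ₂ → TΔ Δ₁ ≤ TΔ Δ₂) ∧
    (∀ Δ : ℕ, 3 ≤ Δ → TΔ Δ ≤ Real.exp 1) ∧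
    (∀ (Δ : ℕ) (lam : ℝ), 3 ≤ Δ → 0 < lam → lam ≤ lambdaC Δ →
      (Δ : ℝ) * lam / (1 + lam) ≤ Real.exp 1) := by
  refine ⟨fun Δ₁ Δ₂ h₁ h₁₂ ↦ monotoneOn_TΔ h₁ (h₁.trans h₁₂) h₁₂, fun Δ ↦ TΔ_le_exp_one,
    fun Δ lam hΔ hlam hlamC ↦ ?_⟩
  calc (Δ : ℝ) * lam / (1 + lam) ≤ TΔ Δ := by
        rw [TΔ, mul_div_assoc, mul_div_assoc]
        refine mul_le_mul_of_nonneg_left ?_ (Nat.cast_nonneg Δ)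
        rw [div_le_div_iff₀ (by positivity) (by linarith)]
        linarith
    _ ≤ exp 1 := TΔ_le_exp_one hΔ
end
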